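/- arXiv:2002.04506 — 2 statements merged into one kernel-verified Lean document; each statement's English description precedes it below -/
import Mathlib

section
/- Up to overall sign, there are exactly two operators of the form β = π(q₁,q₂,m) J π(q₁,q₂,m)* J⁻¹ that commute with the represented unreduced Pati-Salam algebra, commute with J, are self-adjoint and square to the identity: β = π(1₂,1₂,1₄)Jπ(1₂,1₂,1₄)J⁻¹ (the identity) and β = π(1₂,-1₂,1₄)Jπ(1₂,-1₂,1₄)J⁻¹. -/
noncomputable section
open Matrix
open scoped ComplexConjugate

abbrev M2 : Type := Matrix (Fin 2) (Fin 2) ℂ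
abbrev M3 : Type := Matrix (Fin 3) (Fin 3) ℂ
abbrev M4 : Type := Matrix (Fin 4) (Fin 4) ℂ
abbrev Idx : Type := Fin 4 × Fin 2 × Fin 4
abbrev M32 : Type := Matrix Idx Idx ℂ

/-- matrix unit `e_{ij}` -/
def eu {n : ℕ} (i j : Fin n) : Matrix (Fin n) (Fin n) ℂ := Matrix.single i j 1

/-- the element `A ⊗ E ⊗ B` of `M₄(ℂ) ⊗ M₂(ℂ) ⊗ M₄(ℂ)` realized as a matrix on `ℂ⁴ ⊗ ℂ² ⊗ ℂ⁴` -/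
def tp (A : M4) (E : M2) (B : M4) : M32 :=
  Matrix.of fun p q => A p.1 q.1 * E p.2.1 q.2.1 * B p.2.2 q.2.2

/-- a 4×4 matrix assembled from four 2×2 blocks -/
def bm (a b c d : M2) : M4 :=
  Matrix.reindex finSumFinEquiv finSumFinEquiv (Matrix.fromBlocks a b c d)

/-- block-diagonal `diag(a, b)` with 2×2 blocks -/
def diag22 (a b : M2) : M4 := bm a 0 0 b

/-- block-diagonal `diag(l, n)` with a scalar and a 3×3 block -/
def diag13 (l : ℂ) (n : M3) : M4 :=
  Matrix.reindex finSumFinEquiv finSumFinEquiv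
    (Matrix.fromBlocks (Matrix.diagonal fun _ : Fin 1 => l) 0 0 n)

/-- the standard embedding of the quaternions into `M₂(ℂ)` -/
def IsQuat (q : M2) : Prop := ∃ x y : ℂ, q = !![x, y; -(conj y), conj x]

/-- the Hilbert space `ℂ⁴ ⊗ ℂ² ⊗ ℂ⁴ ≅ M₄(ℂ) ⊕ M₄(ℂ)` -/
abbrev HSp : Type := Idx → ℂ

/-- index swap underlying the real structure `J` -/
def sw (p : Idx) : Idx := (p.2.2, if p.2.1 = 0 then 1 else 0, p.1)

/-- the antilinear real structure `J[v;w] = [w*;v*]` -/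
noncomputable def Jr (ψ : HSp) : HSp := fun p => conj (ψ (sw p))

/-- action of an operator on the Hilbert space -/
def act (X : M32) (ψ : HSp) : HSp := X.mulVec ψ

/-- conjugation `X ↦ J X J⁻¹` by the real structure, at the matrix level -/
noncomputable def Jconj (X : M32) : M32 := Matrix.of fun p q => conj (X (sw p) (sw q))

/-- the opposite-algebra element `J X* J⁻¹` -/
noncomputable def opp (X : M32) : M32 := Jconj Xᴴ

/-- representation of the (unreduced) Pati–Salam algebra `ℍ_R ⊕ ℍ_L ⊕ M₄(ℂ)` -/
def piPS (q₁ q₂ : M2) (m : M4) : M32 :=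
  tp (diag22 q₁ q₂) (eu 0 0) 1 + tp m (eu 1 1) 1

/-- representation of the reduced Pati–Salam algebra `ℍ_R ⊕ ℍ_L ⊕ ℂ ⊕ M₃(ℂ)` -/
def piRed (q₁ q₂ : M2) (l : ℂ) (n : M3) : M32 := piPS q₁ q₂ (diag13 l n)

/-- the grading γ -/
def gam : M32 := tp (diag22 1 (-1)) (eu 0 0) 1 + tp 1 (eu 1 1) (diag22 (-1) 1)

/-- the grading γ⋆ -/
def gamStar : M32 :=
  tp (diag22 1 (-1)) (eu 0 0) (diag13 1 (-1)) + tp (diag13 (-1) 1) (eu 1 1) (diag22 1 (-1))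

/-- the nontrivial β for the unreduced model -/
def betaPS : M32 := tp (diag22 1 (-1)) (eu 0 0) 1 + tp 1 (eu 1 1) (diag22 1 (-1))

/-!
Write `D = diag(q₁, q₂)`. A direct computation gives
`β = π(q₁,q₂,m) J π(q₁,q₂,m)* J⁻¹ = D ⊗ e₁₁ ⊗ mᵀ + m ⊗ e₂₂ ⊗ Dᵀ`, so every condition on `β`
splits into conditions on Kronecker products, and a Kronecker factor can be cancelled once the
other factor is known to be nonzero. By `β² = 1` neither `D` nor `m` vanishes. Commuting with
`π(1,1,n)` then makes `m` central, i.e. `m = c·1`, and commuting with `π(σ,σ,0)` for the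
quaternions `σ = diag(i,-i)` and `σ = [[0,1],[-1,0]]` makes `q₁` and `q₂` scalar. Hence
`β = A ⊗ e₁₁ ⊗ 1 + 1 ⊗ e₂₂ ⊗ A` with `A = diag(s·1₂, t·1₂)`, and `β² = 1` forces `s, t = ±1`;
conversely each of the four sign choices meets every requirement.
-/

open scoped Kronecker

namespace Matrix

variable {α l m n p : Type*}

theorem kronecker_left_injective [MulZeroClass α] [IsRightCancelMulZero α] {B : Matrix n p α}
    (hB : B ≠ 0) : Function.Injective fun A : Matrix l m α => A ⊗ₖ B := by
  obtain ⟨j, j', hj⟩ : ∃ j j', B j j' ≠ 0 := by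
    by_contra! h
    exact hB (Matrix.ext h)
  intro A A' h
  ext i i'
  exact mul_right_cancel₀ hj (by simpa using congr_fun₂ h (i, j) (i', j'))

theorem ne_zero_of_kronecker_eq_one [MulZeroOneClass α] [Nontrivial α] [DecidableEq l]
    [DecidableEq n] [Nonempty l] [Nonempty n] {A : Matrix l l α} {B : Matrix n n α}
    (h : A ⊗ₖ B = 1) : A ≠ 0 ∧ B ≠ 0 := by
  obtain ⟨i⟩ := ‹Nonempty l›
  obtain ⟨j⟩ := ‹Nonempty n›
  constructor <;> rintro rfl <;> simpa using congr_fun₂ h (i, j) (i, j)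

theorem exists_smul_one_eq_of_forall_commute {R : Type*} [CommSemiring R] [Fintype n]
    [DecidableEq n] {M : Matrix n n R} (h : ∀ N, Commute M N) : ∃ c : R, c • 1 = M := by
  have hM : M ∈ Set.center (Matrix n n R) := Semigroup.mem_center_iff.mpr fun N => (h N).symm
  rw [center_eq_range] at hM
  obtain ⟨c, hc⟩ := hM
  exact ⟨c, by rw [← hc, scalar_apply, smul_one_eq_diagonal]⟩

end Matrix

theorem tp_eq_kronecker (A : M4) (E : M2) (B : M4) : tp A E B = A ⊗ₖ (E ⊗ₖ B) := by
  ext ⟨i, s, j⟩ ⟨i', s', j'⟩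
  simp [tp, mul_assoc]

def blockKron (A B C D : M4) : M32 := A ⊗ₖ (eu 0 0 ⊗ₖ B) + C ⊗ₖ (eu 1 1 ⊗ₖ D)

theorem blockKron_mul (A B C D A' B' C' D' : M4) :
    blockKron A B C D * blockKron A' B' C' D' = blockKron (A * A') (B * B') (C * C') (D * D') := by
  simp [blockKron, add_mul, mul_add, ← mul_kronecker_mul, eu]

theorem blockKron_one : blockKron 1 1 1 1 = 1 := by
  have : eu (0 : Fin 2) 0 + eu 1 1 = 1 := by
    ext i j; fin_cases i <;> fin_cases j <;> simp [eu]
  rw [blockKron, ← kronecker_add, ← add_kronecker, this, one_kronecker_one, one_kronecker_one]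

theorem blockKron_conjTranspose (A B C D : M4) :
    (blockKron A B C D)ᴴ = blockKron Aᴴ Bᴴ Cᴴ Dᴴ := by
  simp [blockKron, conjTranspose_kronecker, eu]

theorem Jconj_blockKron (A B C D : M4) :
    Jconj (blockKron A B C D) =
      blockKron (D.map conj) (C.map conj) (B.map conj) (A.map conj) := by
  ext ⟨i, s, j⟩ ⟨i', s', j'⟩
  fin_cases s <;> fin_cases s' <;> simp [Jconj, sw, blockKron, eu, single_apply, mul_comm]

theorem kronecker_eq_of_blockKron_eq {A B C D A' B' C' D' : M4}
    (h : blockKron A B C D = blockKron A' B' C' D') : A ⊗ₖ B = A' ⊗ₖ B' ∧ C ⊗ₖ D = C' ⊗ₖ D' := by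
  constructor <;> ext ⟨i, j⟩ ⟨i', j'⟩
  · simpa [blockKron, eu] using congr_fun₂ h (i, 0, j) (i', 0, j')
  · simpa [blockKron, eu] using congr_fun₂ h (i, 1, j) (i', 1, j')

theorem piPS_eq_blockKron (q₁ q₂ : M2) (m : M4) :
    piPS q₁ q₂ m = blockKron (diag22 q₁ q₂) 1 m 1 := by
  rw [piPS, tp_eq_kronecker, tp_eq_kronecker, blockKron]

theorem opp_piPS (q₁ q₂ : M2) (m : M4) :
    opp (piPS q₁ q₂ m) = blockKron 1 mᵀ 1 (diag22 q₁ q₂)ᵀ := by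
  rw [opp, piPS_eq_blockKron, blockKron_conjTranspose, Jconj_blockKron]
  congr 1 <;> ext <;> simp [one_apply, apply_ite]

theorem piPS_mul_opp (q₁ q₂ : M2) (m : M4) :
    piPS q₁ q₂ m * opp (piPS q₁ q₂ m) = blockKron (diag22 q₁ q₂) mᵀ m (diag22 q₁ q₂)ᵀ := by
  rw [opp_piPS, piPS_eq_blockKron, blockKron_mul]
  simp

theorem diag22_mul (a b c d : M2) : diag22 a b * diag22 c d = diag22 (a * c) (b * d) := by
  simp [diag22, bm, fromBlocks_multiply]

theorem diag22_inj {a b c d : M2} : diag22 a b = diag22 c d ↔ a = c ∧ b = d := by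
  rw [diag22, diag22, bm, bm, EmbeddingLike.apply_eq_iff_eq, fromBlocks_inj]
  simp

theorem diag22_one : diag22 1 1 = 1 := by
  simp [diag22, bm]

theorem diag22_transpose (a b : M2) : (diag22 a b)ᵀ = diag22 aᵀ bᵀ := by
  simp [diag22, bm, fromBlocks_transpose]

theorem diag22_conjTranspose (a b : M2) : (diag22 a b)ᴴ = diag22 aᴴ bᴴ := by
  simp [diag22, bm, fromBlocks_conjTranspose]

theorem diag22_map_conj (a b : M2) : (diag22 a b).map conj = diag22 (a.map conj) (b.map conj) := by
  simp [diag22, bm, ← submatrix_map, fromBlocks_map]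

theorem diag22_smul (x : ℂ) (a b : M2) : diag22 (x • a) (x • b) = x • diag22 a b := by
  have h : fromBlocks (x • a) (0 : M2) 0 (x • b) = x • fromBlocks a 0 0 b := by
    rw [fromBlocks_smul, smul_zero]
  rw [diag22, diag22, bm, bm, h]
  rfl

theorem neg_diag22 (a b : M2) : -diag22 a b = diag22 (-a) (-b) := by
  have h : fromBlocks (-a) (0 : M2) 0 (-b) = -fromBlocks a 0 0 b := by
    rw [fromBlocks_neg, neg_zero]
  rw [diag22, diag22, bm, bm, h]
  rfl

theorem isQuat_one : IsQuat 1 := ⟨1, 0, by ext i j; fin_cases i <;> fin_cases j <;> simp⟩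

theorem isQuat_diag_I : IsQuat !![Complex.I, 0; 0, -Complex.I] :=
  ⟨Complex.I, 0, by simp [Complex.conj_I]⟩

theorem isQuat_J : IsQuat !![0, 1; -1, 0] := ⟨0, 1, by simp⟩

theorem eq_smul_one_of_commute_I_J {q : M2} (hI : Commute q !![Complex.I, 0; 0, -Complex.I])
    (hJ : Commute q !![0, 1; -1, 0]) : q = q 0 0 • 1 := by
  have h01 := congr_fun₂ hI 0 1
  have h10 := congr_fun₂ hI 1 0
  have h11 := congr_fun₂ hJ 0 1
  simp only [mul_apply, of_apply, cons_val', cons_val_zero, cons_val_one, cons_val_fin_one,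
    Fin.sum_univ_two, mul_zero, zero_mul, mul_one, one_mul, mul_neg, neg_mul, zero_add,
    add_zero] at h01 h10 h11
  have hq01 : q 0 1 = 0 := by
    have : (2 * Complex.I) * q 0 1 = 0 := by linear_combination -h01
    simpa [Complex.I_ne_zero] using this
  have hq10 : q 1 0 = 0 := by
    have : (2 * Complex.I) * q 1 0 = 0 := by linear_combination h10
    simpa [Complex.I_ne_zero] using this
  ext i j
  fin_cases i <;> fin_cases j <;> simp [hq01, hq10, h11]

def diagBeta (A : M4) : M32 := blockKron A 1 1 A

theorem diagBeta_mul (A B : M4) : diagBeta A * diagBeta B = diagBeta (A * B) := by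
  rw [diagBeta, diagBeta, blockKron_mul, mul_one, diagBeta]

theorem diagBeta_one : diagBeta 1 = 1 := blockKron_one

theorem diagBeta_smul (c : ℂ) (A : M4) : diagBeta (c • A) = c • diagBeta A := by
  simp [diagBeta, blockKron, kronecker_smul, smul_kronecker]

theorem neg_diagBeta (A : M4) : -diagBeta A = diagBeta (-A) := by
  rw [← neg_one_smul ℂ A, diagBeta_smul, neg_one_smul]

theorem diagBeta_injective : Function.Injective diagBeta := fun _ _ h =>
  kronecker_left_injective one_ne_zero (kronecker_eq_of_blockKron_eq h).1

theorem blockKron_smul_one (c : ℂ) (A : M4) : blockKron A (c • 1) (c • 1) A = diagBeta (c • A) := by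
  simp [diagBeta, blockKron, kronecker_smul, smul_kronecker]

theorem commute_diagBeta_piPS {A : M4} {p₁ p₂ : M2} (h : Commute A (diag22 p₁ p₂)) (n : M4) :
    Commute (diagBeta A) (piPS p₁ p₂ n) := by
  rw [Commute, SemiconjBy, piPS_eq_blockKron, diagBeta, blockKron_mul, blockKron_mul, h.eq]
  simp

theorem Jconj_diagBeta (A : M4) : Jconj (diagBeta A) = diagBeta (A.map conj) := by
  rw [diagBeta, Jconj_blockKron, diagBeta, Matrix.map_one _ (map_zero _) (map_one _)]

theorem diagBeta_conjTranspose (A : M4) : (diagBeta A)ᴴ = diagBeta Aᴴ := by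
  rw [diagBeta, blockKron_conjTranspose, conjTranspose_one, diagBeta]

theorem commute_of_commute_piPS_one {D M C E : M4} (hE : E ≠ 0) {n : M4}
    (h : Commute (blockKron D M C E) (piPS 1 1 n)) : Commute C n := by
  rw [Commute, SemiconjBy, piPS_eq_blockKron, diag22_one, blockKron_mul, blockKron_mul] at h
  simp only [mul_one, one_mul] at h
  exact kronecker_left_injective hE (kronecker_eq_of_blockKron_eq h).2

theorem commute_diag22_of_commute_piPS {D M C E : M4} (hM : M ≠ 0) {p₁ p₂ : M2}
    (h : Commute (blockKron D M C E) (piPS p₁ p₂ 0)) : Commute D (diag22 p₁ p₂) := by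
  rw [Commute, SemiconjBy, piPS_eq_blockKron, blockKron_mul, blockKron_mul] at h
  simp only [mul_one, one_mul] at h
  exact kronecker_left_injective hM (kronecker_eq_of_blockKron_eq h).1

theorem exists_eq_diagBeta_smul_one {q₁ q₂ : M2} {m : M4}
    (hcomm : ∀ (p₁ p₂ : M2) (n : M4), IsQuat p₁ → IsQuat p₂ →
      Commute (piPS q₁ q₂ m * opp (piPS q₁ q₂ m)) (piPS p₁ p₂ n))
    (hsq : (piPS q₁ q₂ m * opp (piPS q₁ q₂ m)) * (piPS q₁ q₂ m * opp (piPS q₁ q₂ m)) = 1) :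
    ∃ s t : ℂ, piPS q₁ q₂ m * opp (piPS q₁ q₂ m) = diagBeta (diag22 (s • 1) (t • 1)) := by
  rw [piPS_mul_opp] at hcomm hsq ⊢
  rw [blockKron_mul, ← blockKron_one] at hsq
  obtain ⟨-, hmT⟩ := ne_zero_of_kronecker_eq_one
    ((kronecker_eq_of_blockKron_eq hsq).1.trans one_kronecker_one)
  obtain ⟨-, hDT⟩ := ne_zero_of_kronecker_eq_one
    ((kronecker_eq_of_blockKron_eq hsq).2.trans one_kronecker_one)
  have hm_central (n : M4) : Commute m n :=
    commute_of_commute_piPS_one (left_ne_zero_of_mul hDT) (hcomm 1 1 n isQuat_one isQuat_one)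
  obtain ⟨c, rfl⟩ := exists_smul_one_eq_of_forall_commute hm_central
  have hq (σ : M2) (hσ : IsQuat σ) : Commute q₁ σ ∧ Commute q₂ σ := by
    have h := commute_diag22_of_commute_piPS (left_ne_zero_of_mul hmT) (hcomm σ σ 0 hσ hσ)
    rwa [Commute, SemiconjBy, diag22_mul, diag22_mul, diag22_inj] at h
  rw [eq_smul_one_of_commute_I_J (hq _ isQuat_diag_I).1 (hq _ isQuat_J).1,
    eq_smul_one_of_commute_I_J (hq _ isQuat_diag_I).2 (hq _ isQuat_J).2]
  refine ⟨c * q₁ 0 0, c * q₂ 0 0, ?_⟩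
  simp only [diag22_transpose, transpose_smul, transpose_one, blockKron_smul_one, ← smul_smul,
    diag22_smul]

def IsSign (ε : M2) : Prop := ε = 1 ∨ ε = -1

namespace IsSign

variable {ε : M2}

theorem isQuat (h : IsSign ε) : IsQuat ε := by
  rcases h with rfl | rfl
  exacts [isQuat_one, ⟨-1, 0, by ext i j; fin_cases i <;> fin_cases j <;> simp⟩]

theorem transpose (h : IsSign ε) : εᵀ = ε := by rcases h with rfl | rfl <;> simp

theorem conjTranspose (h : IsSign ε) : εᴴ = ε := by rcases h with rfl | rfl <;> simp

theorem map_conj (h : IsSign ε) : ε.map conj = ε := by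
  rcases h with rfl | rfl <;> ext i j <;> simp [one_apply, apply_ite]

theorem mul_self (h : IsSign ε) : ε * ε = 1 := by rcases h with rfl | rfl <;> simp

theorem commute (h : IsSign ε) (p : M2) : Commute ε p := by
  rcases h with rfl | rfl
  exacts [Commute.one_left p, Commute.neg_one_left p]

end IsSign

theorem isSign_smul_one {s : ℂ} (h : s * s = 1) : IsSign (s • 1) := by
  rcases mul_self_eq_one_iff.mp h with rfl | rfl
  exacts [Or.inl (one_smul _ _), Or.inr (neg_one_smul _ _)]

theorem mul_self_eq_one_of_diagBeta {s t : ℂ}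
    (h : diagBeta (diag22 (s • 1) (t • 1)) * diagBeta (diag22 (s • 1) (t • 1)) = 1) :
    s * s = 1 ∧ t * t = 1 := by
  rw [diagBeta_mul, diag22_mul, ← diagBeta_one, diagBeta_injective.eq_iff, ← diag22_one,
    diag22_inj] at h
  simp only [smul_mul_smul, one_mul] at h
  exact ⟨by simpa using congr_fun₂ h.1 0 0, by simpa using congr_fun₂ h.2 0 0⟩

theorem piPS_mul_opp_of_isSign {ε₁ ε₂ : M2} (h₁ : IsSign ε₁) (h₂ : IsSign ε₂) :
    piPS ε₁ ε₂ 1 * opp (piPS ε₁ ε₂ 1) = diagBeta (diag22 ε₁ ε₂) := by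
  rw [piPS_mul_opp, diag22_transpose, h₁.transpose, h₂.transpose, transpose_one, diagBeta]

def IsBetaOperator (β : M32) : Prop :=
  (∃ (q₁ q₂ : M2) (m : M4), IsQuat q₁ ∧ IsQuat q₂ ∧ β = piPS q₁ q₂ m * opp (piPS q₁ q₂ m)) ∧
    (∀ (p₁ p₂ : M2) (n : M4), IsQuat p₁ → IsQuat p₂ → β * piPS p₁ p₂ n = piPS p₁ p₂ n * β) ∧
    Jconj β = β ∧ βᴴ = β ∧ β * β = 1

theorem isBetaOperator_diagBeta {ε₁ ε₂ : M2} (h₁ : IsSign ε₁) (h₂ : IsSign ε₂) :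
    IsBetaOperator (diagBeta (diag22 ε₁ ε₂)) := by
  refine ⟨⟨ε₁, ε₂, 1, h₁.isQuat, h₂.isQuat, (piPS_mul_opp_of_isSign h₁ h₂).symm⟩,
    fun p₁ p₂ n _ _ => commute_diagBeta_piPS ?_ n, ?_, ?_, ?_⟩
  · rw [Commute, SemiconjBy, diag22_mul, diag22_mul, (h₁.commute p₁).eq, (h₂.commute p₂).eq]
  · rw [Jconj_diagBeta, diag22_map_conj, h₁.map_conj, h₂.map_conj]
  · rw [diagBeta_conjTranspose, diag22_conjTranspose, h₁.conjTranspose, h₂.conjTranspose]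
  · rw [diagBeta_mul, diag22_mul, h₁.mul_self, h₂.mul_self, diag22_one, diagBeta_one]

theorem isBetaOperator_iff {β : M32} :
    IsBetaOperator β ↔ ∃ ε₁ ε₂ : M2, IsSign ε₁ ∧ IsSign ε₂ ∧ β = diagBeta (diag22 ε₁ ε₂) := by
  refine ⟨fun ⟨⟨q₁, q₂, m, _, _, hβ⟩, hcomm, _, _, hsq⟩ => ?_, ?_⟩
  · subst hβ
    obtain ⟨s, t, hst⟩ := exists_eq_diagBeta_smul_one hcomm hsq
    rw [hst] at hsq ⊢
    obtain ⟨hs, ht⟩ := mul_self_eq_one_of_diagBeta hsq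
    exact ⟨_, _, isSign_smul_one hs, isSign_smul_one ht, rfl⟩
  · rintro ⟨ε₁, ε₂, h₁, h₂, rfl⟩
    exact isBetaOperator_diagBeta h₁ h₂

/-- Up to overall sign there are exactly two operators of the form
`β = π(q₁,q₂,m) J π(q₁,q₂,m)* J⁻¹` commuting with the represented unreduced
Pati–Salam algebra and with `J`, self-adjoint and squaring to `1`: namely
`π(1₂,1₂,1₄)Jπ(1₂,1₂,1₄)*J⁻¹` and `π(1₂,-1₂,1₄)Jπ(1₂,-1₂,1₄)*J⁻¹`. -/
theorem beta_unreduced_classification :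
    (∀ β : M32,
      ((∃ (q₁ q₂ : M2) (m : M4), IsQuat q₁ ∧ IsQuat q₂ ∧
          β = piPS q₁ q₂ m * opp (piPS q₁ q₂ m)) ∧
        (∀ (p₁ p₂ : M2) (n : M4), IsQuat p₁ → IsQuat p₂ →
          β * piPS p₁ p₂ n = piPS p₁ p₂ n * β) ∧
        Jconj β = β ∧ βᴴ = β ∧ β * β = 1) ↔
      (β = piPS 1 1 1 * opp (piPS 1 1 1) ∨
       β = -(piPS 1 1 1 * opp (piPS 1 1 1)) ∨
       β = piPS 1 (-1) 1 * opp (piPS 1 (-1) 1) ∨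
       β = -(piPS 1 (-1) 1 * opp (piPS 1 (-1) 1)))) ∧
    piPS 1 (-1) 1 * opp (piPS 1 (-1) 1) ≠ piPS 1 1 1 * opp (piPS 1 1 1) ∧
    piPS 1 (-1) 1 * opp (piPS 1 (-1) 1) ≠ -(piPS 1 1 1 * opp (piPS 1 1 1)) := by
  have h₁ : piPS 1 1 1 * opp (piPS 1 1 1) = diagBeta (diag22 1 1) :=
    piPS_mul_opp_of_isSign (.inl rfl) (.inl rfl)
  have h₂ : piPS 1 (-1) 1 * opp (piPS 1 (-1) 1) = diagBeta (diag22 1 (-1)) :=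
    piPS_mul_opp_of_isSign (.inl rfl) (.inr rfl)
  have hne : (-1 : M2) ≠ 1 := fun h => by
    have h00 := congr_fun₂ h 0 0
    norm_num at h00
  refine ⟨fun β => ?_, ?_, ?_⟩
  · change IsBetaOperator β ↔ _
    rw [isBetaOperator_iff, h₁, h₂, neg_diagBeta, neg_diagBeta, neg_diag22, neg_diag22, neg_neg]
    constructor
    · rintro ⟨ε₁, ε₂, rfl | rfl, rfl | rfl, rfl⟩ <;> simp
    · rintro (rfl | rfl | rfl | rfl)
      exacts [⟨_, _, .inl rfl, .inl rfl, rfl⟩, ⟨_, _, .inr rfl, .inr rfl, rfl⟩,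
        ⟨_, _, .inl rfl, .inr rfl, rfl⟩, ⟨_, _, .inr rfl, .inl rfl, rfl⟩]
  · rw [h₁, h₂, ne_eq, diagBeta_injective.eq_iff, diag22_inj]
    exact fun h => hne h.2
  · rw [h₁, h₂, neg_diagBeta, neg_diag22, ne_eq, diagBeta_injective.eq_iff, diag22_inj]
    exact fun h => hne h.1.symm
end
end

section
/- If an operator D anticommutes with γ = diag(1₂,-1₂) ⊗ e₁₁ ⊗ 1₄ + 1₄ ⊗ e₂₂ ⊗ diag(-1₂,1₂) and commutes with β = diag(1₂,-1₂) ⊗ e₁₁ ⊗ 1₄ + 1₄ ⊗ e₂₂ ⊗ diag(1₂,-1₂), then all components of D of the form M ⊗ e₁₁ ⊗ N and M ⊗ e₂₂ ⊗ N vanish. In particular D contains no term of the form [[0, M_l],[M_l*, 0]] ⊗ e₁₁ ⊗ e₁₁ with M_l ≠ 0. -/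
noncomputable section
open Matrix
open scoped ComplexConjugate

/-! Both gradings are diagonal, and `γ = σ β` for the diagonal sign `σ = 1 ⊗ diag(1, -1) ⊗ 1`
of the middle factor. On an entry `D p q` with `p, q` in the same middle sector, `σ` is a
common scalar `±1`, so anticommuting with `γ` and commuting with `β` give
`D p q (β q + β p) = 0` and `D p q (β q - β p) = 0`; since `β q = ±1`, `D p q = 0`. -/

theorem Matrix.apply_eq_zero_of_anticommute_of_commute_diagonal {ι K : Type*} [Fintype ι]
    [DecidableEq ι] [Field K] [NeZero (2 : K)] {D : Matrix ι ι K} {s b : ι → K}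
    (hanti : D * diagonal (s * b) + diagonal (s * b) * D = 0)
    (hcomm : D * diagonal b = diagonal b * D) {p q : ι}
    (hs : s p = s q) (hs₀ : s q ≠ 0) (hb₀ : b q ≠ 0) : D p q = 0 := by
  have hanti_pq : D p q * (s q * b q) + s p * b p * D p q = 0 := by
    simpa [mul_diagonal, diagonal_mul] using congrFun (congrFun hanti p) q
  have hcomm_pq : D p q * b q = b p * D p q := by
    simpa [mul_diagonal, diagonal_mul] using congrFun (congrFun hcomm p) q
  have : s q * (2 * b q) * D p q = 0 := by
    rw [hs] at hanti_pq
    linear_combination hanti_pq + s q * hcomm_pq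
  simpa [hs₀, hb₀, NeZero.ne] using this

lemma tp_diagonal (f : Fin 4 → ℂ) (e : Fin 2 → ℂ) (h : Fin 4 → ℂ) :
    tp (diagonal f) (diagonal e) (diagonal h) = diagonal fun p => f p.1 * e p.2.1 * h p.2.2 := by
  ext ⟨i, j, k⟩ ⟨i', j', k'⟩
  simp only [tp, of_apply, diagonal_apply, Prod.mk.injEq]
  by_cases h₁ : i = i' <;> by_cases h₂ : j = j' <;> by_cases h₃ : k = k' <;> simp_all

lemma eu_self (i : Fin 2) : eu i i = diagonal (Pi.single i 1) :=
  (diagonal_single i 1).symm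

def sgn22 : Fin 4 → ℂ := ![1, 1, -1, -1]

lemma sgn22_ne_zero (i : Fin 4) : sgn22 i ≠ 0 := by
  fin_cases i <;> norm_num [sgn22]

lemma diag22_one_neg_one : diag22 1 (-1) = diagonal sgn22 := by
  ext i j
  fin_cases i <;> fin_cases j <;>
    simp [diag22, bm, sgn22, one_apply, finSumFinEquiv, Fin.addCases, fromBlocks,
      Fin.ext_iff, Fin.subNat, Fin.castLT]

lemma diag22_neg (a b : M2) : diag22 (-a) (-b) = -diag22 a b := by
  rw [diag22, diag22, bm, bm, ← neg_zero, ← fromBlocks_neg, neg_zero]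
  rfl

lemma diag22_neg_one_one : diag22 (-1) 1 = diagonal (-sgn22) := by
  rw [Pi.neg_def, ← diagonal_neg, ← diag22_one_neg_one, ← diag22_neg, neg_neg]

def betaSign (p : Idx) : ℂ := if p.2.1 = 0 then sgn22 p.1 else sgn22 p.2.2

def middleSign (p : Idx) : ℂ := if p.2.1 = 0 then 1 else -1

lemma betaPS_eq_diagonal : betaPS = diagonal betaSign := by
  rw [betaPS, diag22_one_neg_one, eu_self, eu_self, ← diagonal_one, tp_diagonal, tp_diagonal,
    diagonal_add]
  congr 1
  funext ⟨i, j, k⟩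
  fin_cases j <;> simp [betaSign]

lemma gam_eq_diagonal : gam = diagonal (middleSign * betaSign) := by
  rw [gam, diag22_one_neg_one, diag22_neg_one_one, eu_self, eu_self, ← diagonal_one,
    tp_diagonal, tp_diagonal, diagonal_add]
  congr 1
  funext ⟨i, j, k⟩
  fin_cases j <;> simp [middleSign, betaSign]

lemma middleSign_ne_zero (p : Idx) : middleSign p ≠ 0 := by
  unfold middleSign; split_ifs <;> norm_num

lemma betaSign_ne_zero (p : Idx) : betaSign p ≠ 0 := by
  unfold betaSign; split_ifs <;> exact sgn22_ne_zero _

/-- If `D` anticommutes with the grading `γ` and commutes with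
`β = diag(1₂,-1₂) ⊗ e₁₁ ⊗ 1₄ + 1₄ ⊗ e₂₂ ⊗ diag(1₂,-1₂)`, then all middle-diagonal
components `M ⊗ e₁₁ ⊗ N` and `M ⊗ e₂₂ ⊗ N` of `D` vanish; in particular all
entries of the `… ⊗ e₁₁ ⊗ e₁₁` sector vanish, so `D` contains no Yukawa term
`[[0, M_l],[M_l*, 0]] ⊗ e₁₁ ⊗ e₁₁` with `M_l ≠ 0`. -/
theorem no_yukawa_terms (D : M32)
    (hanti : D * gam + gam * D = 0)
    (hcomm : D * betaPS = betaPS * D) :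
    (∀ p q : Idx, p.2.1 = q.2.1 → D p q = 0) ∧
    (∀ k l : Fin 4, D (k, 0, 0) (l, 0, 0) = 0) := by
  rw [gam_eq_diagonal] at hanti
  rw [betaPS_eq_diagonal] at hcomm
  have sector : ∀ p q : Idx, p.2.1 = q.2.1 → D p q = 0 := fun p q hpq =>
    apply_eq_zero_of_anticommute_of_commute_diagonal hanti hcomm
      (by simp only [middleSign, hpq]) (middleSign_ne_zero q) (betaSign_ne_zero q)
  exact ⟨sector, fun k l => sector (k, 0, 0) (l, 0, 0) rfl⟩
end
end
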